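/- arXiv:1907.00896 — 2 statements merged into one kernel-verified Lean document; each statement's English description precedes it below -/
import Mathlib

section
/- Let r, q ≥ 1 and let P_i = (a_{i,1}, …, a_{i,r}) ∈ ℝ^r, i = 1, …, q, be nonzero vectors with nonnegative coordinates. Suppose that for every subset T ⊊ {1, …, r} of cardinality t, at most t·⌊q/r⌋ of the vectors P_i have support contained in T (i.e., a_{i,j} = 0 for all j ∉ T). Then there exist pairwise disjoint subsets I_1, …, I_{⌊q/r⌋} of {1, …, q}, each of cardinality r, such that for every j = 1, …, ⌊q/r⌋ the vector Σ_{i ∈ I_j} P_i has all coordinates strictly positive. -/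
open scoped Classical

/-! Hall's marriage theorem, applied to the slots `(k, j) ∈ Fin ⌊q/r⌋ × Fin r`, slot `(k, j)`
accepting the vectors `P i` with `a i j > 0`. A set `s` of slots using the coordinates `U` has at
most `⌊q/r⌋ · #U` elements, while every vector not supported on `Uᶜ` is acceptable to some slot
of `s`; by hypothesis there are at least `q - (r - #U) ⌊q/r⌋ ≥ ⌊q/r⌋ · #U` of those. A matching
puts one vector with positive `j`-th coordinate into every block `k` for every `j`. -/

open Finset

section Matching

variable {ι κ : Type*} [Fintype ι] [Fintype κ] [DecidableEq κ] {a : ι → κ → ℝ} {m : ℕ}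

theorem card_le_card_biUnion_pos_of_card_supported_le (hnonneg : ∀ i j, 0 ≤ a i j)
    (hm : m * Fintype.card κ ≤ Fintype.card ι)
    (hsupp : ∀ T : Finset κ, T ≠ univ → #{i | ∀ j, j ∉ T → a i j = 0} ≤ #T * m)
    (s : Finset (Fin m × κ)) :
    #s ≤ #(s.biUnion fun p => {i | 0 < a i p.2}) := by
  rcases s.eq_empty_or_nonempty with rfl | hs
  · simp
  set U := s.image Prod.snd
  set B := s.biUnion fun p => ({i | 0 < a i p.2} : Finset ι)
  have hs_le : #s ≤ m * #U :=
    calc #s ≤ #(s.image Prod.fst ×ˢ U) := card_le_card subset_product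
      _ ≤ m * #U := by
        rw [card_product]
        exact Nat.mul_le_mul_right _ ((card_le_univ _).trans (Fintype.card_fin m).le)
  have hUc : Uᶜ ≠ univ := U.compl_ne_univ_iff_nonempty.mpr (hs.image Prod.snd)
  have hsupported := hsupp Uᶜ hUc
  rw [card_compl] at hsupported
  have hunsupported_sub : ({i | ¬ ∀ j, j ∉ Uᶜ → a i j = 0} : Finset ι) ⊆ B := by
    intro i hi
    simp only [mem_filter, mem_univ, true_and, not_forall, mem_compl, not_not] at hi
    obtain ⟨j, hjU, hij⟩ := hi
    obtain ⟨p, hp, rfl⟩ := mem_image.mp hjU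
    exact mem_biUnion.mpr ⟨p, hp, by simpa using (hnonneg i p.2).lt_of_ne' hij⟩
  have hsplit := card_filter_add_card_filter_not (s := univ)
    (fun i => ∀ j, j ∉ Uᶜ → a i j = 0)
  rw [card_univ] at hsplit
  have hcover : m * #U + (Fintype.card κ - #U) * m = m * Fintype.card κ := by
    rw [mul_comm _ m, ← mul_add, Nat.add_sub_cancel' (card_le_univ U)]
  have hB := card_le_card hunsupported_sub
  omega

theorem exists_injective_pos_of_card_supported_le (hnonneg : ∀ i j, 0 ≤ a i j)
    (hm : m * Fintype.card κ ≤ Fintype.card ι)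
    (hsupp : ∀ T : Finset κ, T ≠ univ → #{i | ∀ j, j ∉ T → a i j = 0} ≤ #T * m) :
    ∃ f : Fin m × κ → ι, f.Injective ∧ ∀ p, 0 < a (f p) p.2 := by
  obtain ⟨f, hf, hpos⟩ := (all_card_le_biUnion_card_iff_exists_injective _).mp
    (card_le_card_biUnion_pos_of_card_supported_le hnonneg hm hsupp)
  exact ⟨f, hf, fun p => by simpa using hpos p⟩

end Matching

section Blocks

variable {α β γ : Type*} [Fintype β] [DecidableEq γ] {f : α × β → γ}

def rowImage (f : α × β → γ) (k : α) : Finset γ := univ.image fun j => f (k, j)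

theorem card_rowImage (hf : f.Injective) (k : α) : #(rowImage f k) = Fintype.card β :=
  card_image_of_injective _ (hf.comp (Prod.mk_right_injective k))

theorem disjoint_rowImage (hf : f.Injective) {k k' : α} (hk : k ≠ k') :
    Disjoint (rowImage f k) (rowImage f k') := by
  simp only [rowImage, disjoint_left, mem_image, mem_univ, true_and, not_exists]
  rintro _ ⟨j, rfl⟩ j' hj'
  exact hk (congrArg Prod.fst (hf hj')).symm

theorem sum_rowImage_pos {a : γ → β → ℝ} (hnonneg : ∀ i j, 0 ≤ a i j)
    (hpos : ∀ p, 0 < a (f p) p.2) (k : α) (j : β) : 0 < ∑ i ∈ rowImage f k, a i j :=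
  sum_pos' (fun i _ => hnonneg i j) ⟨f (k, j), mem_image_of_mem _ (mem_univ j), hpos (k, j)⟩

end Blocks

theorem stmt_8_general (r q : ℕ)
    (a : Fin q → Fin r → ℝ)
    (hnonneg : ∀ i j, 0 ≤ a i j)
    (hsupp : ∀ T : Finset (Fin r), T ≠ Finset.univ →
      (Finset.univ.filter fun i => ∀ j, j ∉ T → a i j = 0).card ≤ T.card * (q / r)) :
    ∃ I : Fin (q / r) → Finset (Fin q),
      (∀ k k', k ≠ k' → Disjoint (I k) (I k')) ∧
      (∀ k, (I k).card = r) ∧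
      (∀ k, ∀ j : Fin r, 0 < ∑ i ∈ I k, a i j) := by
  have hm : q / r * Fintype.card (Fin r) ≤ Fintype.card (Fin q) := by
    simpa using Nat.div_mul_le_self q r
  obtain ⟨f, hf, hpos⟩ := exists_injective_pos_of_card_supported_le hnonneg hm
    fun T hT => by convert hsupp T hT -- `Fin r` picks a different `Decidable` instance for the filter
  refine ⟨rowImage f, fun _ _ => disjoint_rowImage hf, fun k => ?_,
    sum_rowImage_pos hnonneg hpos⟩
  simpa using card_rowImage hf k

/-- Lemma 3.1: nonzero vectors `P i ∈ ℝ^r` with nonnegative coordinates such that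
for every proper subset `T ⊊ {1,…,r}` at most `#T·⌊q/r⌋` of the `P i` are
supported on `T` can be partitioned into `⌊q/r⌋` pairwise disjoint `r`-element
index sets on each of which the sum of the vectors has all coordinates positive. -/
theorem stmt_8 (r q : ℕ) (hr : 1 ≤ r) (hq : 1 ≤ q)
    (a : Fin q → Fin r → ℝ)
    (hnonneg : ∀ i j, 0 ≤ a i j)
    (hnz : ∀ i, ∃ j, a i j ≠ 0)
    (hsupp : ∀ T : Finset (Fin r), T ≠ Finset.univ →
      (Finset.univ.filter fun i => ∀ j, j ∉ T → a i j = 0).card ≤ T.card * (q / r)) :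
    ∃ I : Fin (q / r) → Finset (Fin q),
      (∀ k k', k ≠ k' → Disjoint (I k) (I k')) ∧
      (∀ k, (I k).card = r) ∧
      (∀ k, ∀ j : Fin r, 0 < ∑ i ∈ I k, a i j) :=
  stmt_8_general r q a hnonneg hsupp
end

section
/- Let X be a set, let dim be a function from subsets of X to ℤ ∪ {-∞} that is monotone (S ⊆ T implies dim S ≤ dim T) and satisfies dim(S ∪ T) = max(dim S, dim T) for all S, T ⊆ X, with dim ∅ = -∞. Let n ≥ 0 and let S_1, …, S_q ⊆ X be subsets such that for every I ⊆ {1, …, q} with |I| ≤ n + 1 one has dim(∩_{i ∈ I} S_i) ≤ n - |I|. Let I_1, …, I_m ⊆ {1, …, q} be nonempty pairwise disjoint subsets and set T_k = ∪_{i ∈ I_k} S_i. Then for every J ⊆ {1, …, m} with |J| ≤ n + 1, dim(∩_{k ∈ J} T_k) ≤ n - |J|. -/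
/-!
Distributing the intersection over the unions writes `⋂_{k ∈ J} T_k` as the finite union, over
choice functions `f` with `f k ∈ I_k`, of `⋂_{k ∈ J} S_{f k}`. Disjointness of the `I_k` makes each
`f` injective, so every piece is an intersection of `|J|` distinct `S_i`, and `dim` of a finite
union is the maximum of the `dim`s of the pieces.
-/

def GeneralPosition {X ι : Type*} (dim : Set X → WithBot ℤ) (n : ℕ) (S : ι → Set X) : Prop :=
  ∀ I : Finset ι, I.card ≤ n + 1 → dim (⋂ i ∈ I, S i) ≤ ((n : ℤ) - (I.card : ℤ) : ℤ)

section

open Function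

variable {X ι : Type*} {dim : Set X → WithBot ℤ}

theorem dim_biUnion_le (hunion : ∀ S T : Set X, dim (S ∪ T) = max (dim S) (dim T))
    (hempty : dim ∅ = ⊥) {s : Finset ι} {U : ι → Set X} {c : WithBot ℤ}
    (h : ∀ i ∈ s, dim (U i) ≤ c) : dim (⋃ i ∈ s, U i) ≤ c := by
  classical
  induction s using Finset.induction_on with
  | empty => simp [hempty]
  | insert a s _ ih =>
    rw [Finset.set_biUnion_insert, hunion]
    exact max_le (h a (s.mem_insert_self a)) (ih fun i hi => h i (Finset.mem_insert_of_mem hi))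

theorem dim_iUnion_le [Fintype ι] (hunion : ∀ S T : Set X, dim (S ∪ T) = max (dim S) (dim T))
    (hempty : dim ∅ = ⊥) {U : ι → Set X} {c : WithBot ℤ}
    (h : ∀ i, dim (U i) ≤ c) : dim (⋃ i, U i) ≤ c := by
  simpa using dim_biUnion_le hunion hempty (s := Finset.univ) fun i _ => h i

theorem GeneralPosition.dim_iInter_le {n : ℕ} {S : ι → Set X} (hS : GeneralPosition dim n S)
    {κ : Type*} [Fintype κ] {g : κ → ι} (hg : g.Injective) (hκ : Fintype.card κ ≤ n + 1) :
    dim (⋂ k, S (g k)) ≤ ((n : ℤ) - Fintype.card κ : ℤ) := by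
  classical
  have hcard : (Finset.univ.image g).card = Fintype.card κ :=
    Finset.card_image_of_injective _ hg
  simpa [hcard, Finset.set_biInter_finset_image] using hS (Finset.univ.image g) (hcard ▸ hκ)

theorem GeneralPosition.biUnion {n : ℕ} {S : ι → Set X} (hS : GeneralPosition dim n S)
    (hunion : ∀ S T : Set X, dim (S ∪ T) = max (dim S) (dim T)) (hempty : dim ∅ = ⊥)
    {κ : Type*} {I : κ → Finset ι} (hI : Pairwise (Disjoint on I)) :
    GeneralPosition dim n fun k => ⋃ i ∈ I k, S i := by
  classical
  intro J hJ
  have hdistrib : ⋂ k ∈ J, ⋃ i ∈ I k, S i = ⋃ f : (k : J) → I k, ⋂ k, S (f k) := by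
    rw [← Finset.set_biInter_coe, Set.biInter_eq_iInter]
    simp only [← Finset.set_biUnion_coe, Set.biUnion_eq_iUnion]
    exact iInf_iSup_eq
  rw [hdistrib]
  refine dim_iUnion_le hunion hempty fun f => ?_
  have hf : Injective fun k : J => (f k : ι) := by
    intro k k' (h : (f k : ι) = f k')
    by_contra hne
    have hk' : (f k : ι) ∈ I k' := h ▸ (f k').2
    exact Finset.disjoint_left.mp (hI (Subtype.coe_ne_coe.mpr hne)) (f k).2 hk'
  simpa using hS.dim_iInter_le hf (by simpa using hJ)
end

theorem stmt_12_general (X : Type*) (dim : Set X → WithBot ℤ)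
    (hunion : ∀ S T : Set X, dim (S ∪ T) = max (dim S) (dim T))
    (hempty : dim ∅ = ⊥)
    (n q m : ℕ) (S : Fin q → Set X)
    (hgp : ∀ I : Finset (Fin q), I.card ≤ n + 1 →
      dim (⋂ i ∈ I, S i) ≤ ((n : ℤ) - (I.card : ℤ) : ℤ))
    (I : Fin m → Finset (Fin q))
    (hdisj : ∀ k k', k ≠ k' → Disjoint (I k) (I k')) :
    ∀ J : Finset (Fin m), J.card ≤ n + 1 →
      dim (⋂ k ∈ J, ⋃ i ∈ I k, S i) ≤ ((n : ℤ) - (J.card : ℤ) : ℤ) :=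
  GeneralPosition.biUnion hgp hunion hempty fun k k' => hdisj k k'

/-- Abstract general-position preservation: if `dim : Set X → ℤ ∪ {-∞}` is
monotone, turns finite unions into maxima and sends `∅` to `-∞`, the sets
`S i` satisfy the general position condition `dim (∩_{i∈I} S i) ≤ n - |I|` for
all `|I| ≤ n+1`, and `I 1, …, I m` are nonempty pairwise disjoint index sets
with `T k = ∪_{i ∈ I k} S i`, then the `T k` satisfy the same condition. -/
theorem stmt_12 (X : Type*) (dim : Set X → WithBot ℤ)
    (hmono : ∀ S T : Set X, S ⊆ T → dim S ≤ dim T)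
    (hunion : ∀ S T : Set X, dim (S ∪ T) = max (dim S) (dim T))
    (hempty : dim ∅ = ⊥)
    (n q m : ℕ) (S : Fin q → Set X)
    (hgp : ∀ I : Finset (Fin q), I.card ≤ n + 1 →
      dim (⋂ i ∈ I, S i) ≤ ((n : ℤ) - (I.card : ℤ) : ℤ))
    (I : Fin m → Finset (Fin q))
    (hne : ∀ k, (I k).Nonempty)
    (hdisj : ∀ k k', k ≠ k' → Disjoint (I k) (I k')) :
    ∀ J : Finset (Fin m), J.card ≤ n + 1 →
      dim (⋂ k ∈ J, ⋃ i ∈ I k, S i) ≤ ((n : ℤ) - (J.card : ℤ) : ℤ) :=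
  stmt_12_general X dim hunion hempty n q m S hgp I hdisj
end
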